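/- arXiv:math/0607409 — 3 statements merged into one kernel-verified Lean document; each statement's English description precedes it below -/
import Mathlib

section
/- Let p ∈ {5, 7} and let k ≥ 4 be an even integer. For every θ ∈ [0, π], the complex number F*_{k,p,1}(θ) := e^{ikθ/2}·E*_{k,p}(e^{iθ}/√p) is real (its imaginary part is zero). -/
open Complex Real

/-- The Eisenstein series `E_k(z) = (1/2) Σ_{gcd(c,d)=1} (cz+d)^{-k}`. -/
noncomputable def Ek (k : ℕ) (z : ℂ) : ℂ :=
  (1 / 2) * ∑' q : ℤ × ℤ, if Int.gcd q.1 q.2 = 1 then ((q.1 : ℂ) * z + q.2) ^ (-(k : ℤ)) else 0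

/-- The Eisenstein series `E*_{k,p}(z) = (p^{k/2} E_k(pz) + E_k(z)) / (p^{k/2}+1)`
associated with the Fricke group, where `p^{k/2}` is written as `(√p)^k`. -/
noncomputable def Estar (p k : ℕ) (z : ℂ) : ℂ :=
  (((Real.sqrt p) ^ k : ℝ) * Ek k (p * z) + Ek k z) / (((Real.sqrt p) ^ k : ℝ) + 1)

/-! On the circle `|z| = 1/√p` the reflection `z ↦ -z̄` coincides with the Fricke involution
`z ↦ -1/(pz)`. Both act on `E*_{k,p}` by reindexing the Eisenstein sums (`c ↦ -c`, resp.
`(c, d) ↦ (-d, c)`), so there `conj E*_{k,p}(z) = (√p z)^k E*_{k,p}(z)`. With `z = e^{iθ}/√p`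
this says `conj E*_{k,p}(z) = e^{ikθ} E*_{k,p}(z)`, i.e. `e^{ikθ/2} E*_{k,p}(z)` is real.
The identities are exact reindexings of `tsum`, so they hold whether or not the series converge. -/

open ComplexConjugate

lemma Ek_conj (k : ℕ) (z : ℂ) : conj (Ek k z) = Ek k (-conj z) := by
  unfold Ek
  rw [map_mul, starRingEnd_apply, starRingEnd_apply, tsum_star,
    ← (Equiv.prodCongr (Equiv.neg ℤ) (Equiv.refl ℤ)).tsum_eq]
  congr 1
  · simp
  refine tsum_congr fun q => ?_
  simp only [Equiv.prodCongr_apply, Equiv.coe_refl, Prod.map, Equiv.neg_apply, id, Int.neg_gcd]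
  split_ifs
  · rw [star_zpow₀, star_add, star_mul, ← starRingEnd_apply, ← starRingEnd_apply,
      ← starRingEnd_apply]
    push_cast
    simp only [map_intCast, map_neg, mul_neg, neg_mul, mul_comm]
  · simp

lemma Ek_neg_inv (k : ℕ) {z : ℂ} (hz : z ≠ 0) : Ek k (-1 / z) = z ^ k * Ek k z := by
  unfold Ek
  rw [mul_left_comm]
  congr 1
  rw [← tsum_mul_left,
    ← ((Equiv.prodCongr (Equiv.refl ℤ) (Equiv.neg ℤ)).trans (Equiv.prodComm ℤ ℤ)).tsum_eq]
  refine tsum_congr fun q => ?_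
  simp only [Equiv.trans_apply, Equiv.prodCongr_apply, Equiv.coe_refl, Prod.map,
    Equiv.neg_apply, id_eq, Equiv.prodComm_apply, Prod.swap_prod_mk, Int.neg_gcd, Int.gcd_comm q.2]
  split_ifs
  · have hmoebius : ((-q.2 : ℤ) : ℂ) * (-1 / z) + (q.1 : ℂ) = ((q.1 : ℂ) * z + q.2) / z := by
      push_cast
      field_simp
      ring
    rw [hmoebius, div_zpow, zpow_neg z, div_inv_eq_mul, zpow_natCast, mul_comm]
  · simp

lemma Estar_conj (p k : ℕ) (z : ℂ) : conj (Estar p k z) = Estar p k (-conj z) := by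
  simp only [Estar, map_div₀, map_add, map_mul, map_one, conj_ofReal, Ek_conj, map_natCast,
    mul_neg]

lemma Estar_neg_inv {p : ℕ} (hp : p ≠ 0) (k : ℕ) {z : ℂ} (hz : z ≠ 0) :
    Estar p k (-1 / (p * z)) = ((√p : ℂ) * z) ^ k * Estar p k z := by
  have hpC : (p : ℂ) ≠ 0 := Nat.cast_ne_zero.mpr hp
  have hsq : ((√p : ℝ) : ℂ) ^ 2 = p := by
    rw [← ofReal_pow, Real.sq_sqrt (Nat.cast_nonneg p), ofReal_natCast]
  have hcancel : (p : ℂ) * (-1 / (p * z)) = -1 / z := by field_simp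
  rw [Estar, Estar, hcancel, Ek_neg_inv k hz, Ek_neg_inv k (mul_ne_zero hpC hz), mul_div_assoc']
  congr 1
  rw [← hsq]
  push_cast
  ring

lemma Estar_conj_of_normSq_eq {p : ℕ} (k : ℕ) {z : ℂ} (hz : p * normSq z = 1) :
    conj (Estar p k z) = ((√p : ℂ) * z) ^ k * Estar p k z := by
  have hp : p ≠ 0 := by
    rintro rfl
    simp at hz
  have hz0 : z ≠ 0 := by
    rintro rfl
    simp at hz
  have hreflect : -conj z = -1 / (p * z) := by
    have hmul : z * conj z = (normSq z : ℂ) := mul_conj z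
    have hpC : (p : ℂ) * normSq z = 1 := by exact_mod_cast hz
    rw [neg_div, neg_inj, eq_div_iff (mul_ne_zero (Nat.cast_ne_zero.mpr hp) hz0)]
    linear_combination (p : ℂ) * hmul + hpC
  rw [Estar_conj, hreflect, Estar_neg_inv hp k hz0]

theorem Fstar1_is_real_general (p : ℕ) (hp : p = 5 ∨ p = 7) (k : ℕ)
    (θ : ℝ) :
    (Complex.exp (Complex.I * k * θ / 2) *
      Estar p k (Complex.exp (Complex.I * θ) / (Real.sqrt p : ℂ))).im = 0 := by
  have hp0 : p ≠ 0 := by omega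
  set u := Complex.exp ((θ / 2 : ℝ) * I)
  have hu1 : ‖u‖ = 1 := norm_exp_ofReal_mul_I _
  have hu : conj u = u⁻¹ := by
    rw [← exp_conj, ← Complex.exp_neg, map_mul, conj_ofReal, conj_I, mul_neg]
  have hsqrt : ((√p : ℝ) : ℂ) ≠ 0 := by
    exact_mod_cast (Real.sqrt_pos.mpr (by positivity : (0 : ℝ) < p)).ne'
  have hcircle : Complex.exp (I * θ) = u ^ 2 := by
    rw [← Complex.exp_nat_mul]; congr 1; push_cast; ring
  have hhalf : Complex.exp (I * k * θ / 2) = u ^ k := by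
    rw [← Complex.exp_nat_mul]; congr 1; push_cast; ring
  have hnorm : (p : ℝ) * normSq (u ^ 2 / (√p : ℝ)) = 1 := by
    rw [normSq_div, map_pow, normSq_ofReal, Real.mul_self_sqrt (Nat.cast_nonneg p),
      normSq_eq_norm_sq, hu1]
    field_simp
  rw [hcircle, hhalf, ← conj_eq_iff_im, map_mul, map_pow, hu,
    Estar_conj_of_normSq_eq k hnorm, mul_div_cancel₀ _ hsqrt]
  have hu0 : u ≠ 0 := exp_ne_zero _
  rw [← mul_assoc, ← mul_pow, sq, inv_mul_cancel_left₀ hu0]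

theorem Fstar1_is_real (p : ℕ) (hp : p = 5 ∨ p = 7) (k : ℕ) (hk : 4 ≤ k) (hke : Even k)
    (θ : ℝ) (hθ : θ ∈ Set.Icc 0 Real.pi) :
    (Complex.exp (Complex.I * k * θ / 2) *
      Estar p k (Complex.exp (Complex.I * θ) / (Real.sqrt p : ℂ))).im = 0 :=
  Fstar1_is_real_general p hp k θ
end

section
/- Let p ∈ {5, 7} and let k ≥ 4 be an even integer. For every θ ∈ [0, π], the complex number F*_{k,p,2}(θ) := e^{ikθ/2}·E*_{k,p}(e^{iθ}/(2√p) − 1/2) is real (its imaginary part is zero). -/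
open Complex Real

/-!
Write `z = e^{iθ}/(2√p) - 1/2` and `p = 2m + 1`. The Möbius map of the integer matrix
`[[-1, -m], [2, p]]` (determinant `-1`) sends `pz` to `z̄`, and its automorphy factor at `pz` is
`√p e^{iθ}`. Since `E_k` transforms with weight `k` under all of `GL₂(ℤ)` (reindex the sum over
coprime pairs by the matrix), `E_k(z̄) = (√p e^{iθ})^k E_k(pz)` and, conjugating,
`E_k(z) = (√p e^{-iθ})^k E_k(p z̄)`. Multiplying by `e^{∓ikθ/2}`, complex conjugation
exchanges the two summands of `e^{ikθ/2} E*_{k,p}(z)`.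
-/

open ComplexConjugate

theorem conj_Ek (k : ℕ) (z : ℂ) : conj (Ek k z) = Ek k (conj z) := by
  unfold Ek
  rw [map_mul, ← Complex.star_def, tsum_star]
  congr 1
  · simp
  · refine tsum_congr fun q => ?_
    split_ifs <;> simp

theorem IsCoprime.of_vecMul {x y : ℤ} (a b c d : ℤ)
    (h : IsCoprime (x * a + y * c) (x * b + y * d)) : IsCoprime x y := by
  obtain ⟨u, v, huv⟩ := h
  exact ⟨u * a + v * b, u * c + v * d, by linear_combination huv⟩

/-- `q ↦ q * [[a, b], [c, d]]` on row vectors; as `a * d - b * c = ±1` is its own inverse, the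
inverse map is multiplication by `(a * d - b * c) • adjugate`. -/
def vecMulEquiv (a b c d : ℤ) (hdet : IsUnit (a * d - b * c)) : ℤ × ℤ ≃ ℤ × ℤ where
  toFun q := (q.1 * a + q.2 * c, q.1 * b + q.2 * d)
  invFun q := (q.1 * ((a * d - b * c) * d) + q.2 * (-((a * d - b * c) * c)),
    q.1 * (-((a * d - b * c) * b)) + q.2 * ((a * d - b * c) * a))
  left_inv := by
    have h := Int.isUnit_mul_self hdet
    rintro ⟨x, y⟩
    ext
    · linear_combination x * h
    · linear_combination y * h
  right_inv := by
    have h := Int.isUnit_mul_self hdet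
    rintro ⟨x, y⟩
    ext
    · linear_combination x * h
    · linear_combination y * h

theorem gcd_vecMulEquiv_eq_one_iff {a b c d : ℤ} (hdet : IsUnit (a * d - b * c)) (q : ℤ × ℤ) :
    Int.gcd (vecMulEquiv a b c d hdet q).1 (vecMulEquiv a b c d hdet q).2 = 1 ↔
      Int.gcd q.1 q.2 = 1 := by
  simp only [← Int.isCoprime_iff_gcd_eq_one]
  refine ⟨IsCoprime.of_vecMul a b c d, fun h => ?_⟩
  rw [← (vecMulEquiv a b c d hdet).symm_apply_apply q] at h
  exact IsCoprime.of_vecMul _ _ _ _ h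

theorem Ek_moebius {a b c d : ℤ} (hdet : IsUnit (a * d - b * c)) (k : ℕ) {z : ℂ}
    (hz : (c : ℂ) * z + d ≠ 0) :
    Ek k ((a * z + b) / (c * z + d)) = ((c : ℂ) * z + d) ^ k * Ek k z := by
  set σ := vecMulEquiv a b c d hdet
  have hterm : ∀ q : ℤ × ℤ, (q.1 : ℂ) * ((a * z + b) / (c * z + d)) + q.2 =
      ((σ q).1 * z + (σ q).2) / (c * z + d) := by
    intro q
    have hlin : ((σ q).1 : ℂ) * z + (σ q).2 = q.1 * (a * z + b) + q.2 * (c * z + d) := by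
      simp only [σ, vecMulEquiv, Equiv.coe_fn_mk]
      push_cast
      ring
    rw [hlin, eq_div_iff hz, add_mul, mul_assoc (q.1 : ℂ), div_mul_cancel₀ _ hz]
  have hsum : ∀ q : ℤ × ℤ,
      (if Int.gcd q.1 q.2 = 1 then
          ((q.1 : ℂ) * ((a * z + b) / (c * z + d)) + q.2) ^ (-(k : ℤ)) else 0) =
        ((c : ℂ) * z + d) ^ k *
          if Int.gcd (σ q).1 (σ q).2 = 1 then
            (((σ q).1 : ℂ) * z + (σ q).2) ^ (-(k : ℤ)) else 0 := by
    intro q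
    by_cases h : Int.gcd q.1 q.2 = 1
    · rw [if_pos h, if_pos ((gcd_vecMulEquiv_eq_one_iff hdet q).2 h), hterm, div_zpow, zpow_neg,
        zpow_neg, div_inv_eq_mul, mul_comm, zpow_natCast]
    · rw [if_neg h, if_neg (mt (gcd_vecMulEquiv_eq_one_iff hdet q).1 h), mul_zero]
  unfold Ek
  rw [tsum_congr hsum, tsum_mul_left,
    Equiv.tsum_eq σ fun q =>
      if Int.gcd q.1 q.2 = 1 then ((q.1 : ℂ) * z + q.2) ^ (-(k : ℤ)) else 0]
  ring

theorem Ek_conj_arc {p : ℕ} (hp : Odd p) (k : ℕ) {E : ℂ} (hE : ‖E‖ = 1) :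
    Ek k (conj (E / (2 * √p) - 1 / 2)) =
      ((√p : ℂ) * E) ^ k * Ek k (p * (E / (2 * √p) - 1 / 2)) := by
  obtain ⟨m, hm⟩ := hp
  have hs : (√p : ℂ) ≠ 0 := by
    rw [ofReal_ne_zero, Real.sqrt_ne_zero']
    exact_mod_cast (by omega : 0 < p)
  have hs2 : (√p : ℂ) ^ 2 = p := by
    rw [← ofReal_pow, Real.sq_sqrt (Nat.cast_nonneg p), ofReal_natCast]
  have hmC : (p : ℂ) = 2 * m + 1 := by exact_mod_cast hm
  have hE0 : E ≠ 0 := norm_ne_zero_iff.mp (hE ▸ one_ne_zero)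
  have hdet : IsUnit ((-1) * (p : ℤ) - (-(m : ℤ)) * 2) := by
    rw [hm]
    push_cast
    ring_nf
    exact isUnit_one.neg
  have hfactor : ((2 : ℤ) : ℂ) * (p * (E / (2 * √p) - 1 / 2)) + ((p : ℤ) : ℂ) = √p * E := by
    push_cast
    field_simp
    linear_combination (-E) * hs2
  have hconj : conj (E / (2 * √p) - 1 / 2) =
      (((-1 : ℤ) : ℂ) * (p * (E / (2 * √p) - 1 / 2)) + ((-m : ℤ) : ℂ)) /
        (((2 : ℤ) : ℂ) * (p * (E / (2 * √p) - 1 / 2)) + ((p : ℤ) : ℂ)) := by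
    rw [hfactor]
    simp only [map_sub, map_div₀, map_mul, conj_ofReal, map_ofNat, map_one, ← inv_eq_conj hE]
    push_cast
    field_simp
    linear_combination (-E) * hs2 - (√p : ℂ) * hmC
  rw [hconj, Ek_moebius hdet k (hfactor ▸ mul_ne_zero hs hE0), hfactor]

theorem Estar_arc_real {p : ℕ} (hp : Odd p) (k : ℕ) {ζ : ℂ} (hζ : ‖ζ‖ = 1) :
    (ζ ^ k * Estar p k (ζ ^ 2 / (2 * √p) - 1 / 2)).im = 0 := by
  set z := ζ ^ 2 / (2 * √p) - 1 / 2
  have hE : ‖ζ ^ 2‖ = 1 := by rw [norm_pow, hζ, one_pow]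
  have h1 : Ek k (conj z) = ((√p : ℂ) * ζ ^ 2) ^ k * Ek k (p * z) := Ek_conj_arc hp k hE
  have h2 : Ek k z = ((√p : ℂ) * conj ζ ^ 2) ^ k * Ek k (p * conj z) := by
    simpa [conj_Ek] using congrArg conj h1
  have hunit : (conj ζ * ζ) ^ k = 1 := by
    rw [← inv_eq_conj hζ, inv_mul_cancel₀ (norm_ne_zero_iff.mp (hζ ▸ one_ne_zero)), one_pow]
  rw [← conj_eq_iff_im]
  unfold Estar
  simp only [map_mul, map_div₀, map_add, map_pow, conj_ofReal, map_natCast, map_one, conj_Ek]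
  rw [h1, h2, mul_div_assoc', mul_div_assoc']
  congr 1
  push_cast
  linear_combination ((√p : ℂ) ^ k * ζ ^ k * Ek k (p * z) -
    (√p : ℂ) ^ k * conj ζ ^ k * Ek k (p * conj z)) * hunit

theorem Fstar2_is_real_general (p : ℕ) (hp : p = 5 ∨ p = 7) (k : ℕ)
    (θ : ℝ) :
    (Complex.exp (Complex.I * k * θ / 2) *
      Estar p k (Complex.exp (Complex.I * θ) / (2 * (Real.sqrt p : ℂ)) - 1 / 2)).im = 0 := by
  have hodd : Odd p := by rcases hp with rfl | rfl <;> decide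
  have hζ : ‖exp ((θ / 2 : ℝ) * I)‖ = 1 := norm_exp_ofReal_mul_I _
  have hk : exp (I * k * θ / 2) = exp ((θ / 2 : ℝ) * I) ^ k := by
    rw [← Complex.exp_nat_mul]; push_cast; ring_nf
  have h2 : exp (I * θ) = exp ((θ / 2 : ℝ) * I) ^ 2 := by
    rw [← Complex.exp_nat_mul]; push_cast; ring_nf
  rw [hk, h2]
  exact Estar_arc_real hodd k hζ

theorem Fstar2_is_real (p : ℕ) (hp : p = 5 ∨ p = 7) (k : ℕ) (hk : 4 ≤ k) (hke : Even k)
    (θ : ℝ) (hθ : θ ∈ Set.Icc 0 Real.pi) :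
    (Complex.exp (Complex.I * k * θ / 2) *
      Estar p k (Complex.exp (Complex.I * θ) / (2 * (Real.sqrt p : ℂ)) - 1 / 2)).im = 0 :=
  Fstar2_is_real_general p hp k θ
end

section
/- Let k be a positive even integer with k not divisible by 6, and let f be a modular form of weight k for the Fricke group Γ₀*(7). Then f(−5/14 + (√3/14)·i) = 0. -/
/-!
The matrix `γ = [[2, 1], [-7, -3]]` lies in `Γ₀(7)`, has trace `-1` and fixes
`ρ = -5/14 + (√3/14) i`. At a fixed point `τ` of any `γ ∈ SL(2, ℤ)` the automorphy factor
`j = cτ + d` is a root of `X² - (tr γ) X + 1`, so here `j` is a primitive cube root of unity.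
Invariance under `γ` gives `f ρ = j ^ k * f ρ`, and `j ^ k ≠ 1` because `3 ∤ k`.
-/

open Complex Real UpperHalfPlane
open scoped MatrixGroups

open ModularGroup in
theorem UpperHalfPlane.denom_sq_sub_trace_mul_add_one_of_smul_eq_self {γ : SL(2, ℤ)} {τ : ℍ}
    (h : γ • τ = τ) :
    denom γ τ ^ 2 - ((γ 0 0 + γ 1 1 : ℤ) : ℂ) * denom γ τ + 1 = 0 := by
  have hne : (γ 1 0 : ℂ) * τ + γ 1 1 ≠ 0 := denom_ne_zero γ τ
  have hfix : (γ 0 0 : ℂ) * τ + γ 0 1 = τ * (γ 1 0 * τ + γ 1 1) := by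
    have := congrArg ((↑) : ℍ → ℂ) h
    simp only [coe_specialLinearGroup_apply, algebraMap_int_eq, eq_intCast, ofReal_intCast] at this
    rwa [div_eq_iff hne] at this
  have hdet : (γ 0 0 * γ 1 1 - γ 0 1 * γ 1 0 : ℂ) = 1 := by
    exact_mod_cast (Matrix.det_fin_two _).symm.trans γ.det_coe
  rw [denom_apply]
  push_cast
  linear_combination (-(γ 1 0 : ℂ)) * hfix - hdet

open Polynomial in
theorem UpperHalfPlane.isPrimitiveRoot_denom_of_smul_eq_self {γ : SL(2, ℤ)} {τ : ℍ}
    (htr : γ 0 0 + γ 1 1 = -1) (h : γ • τ = τ) : IsPrimitiveRoot (denom γ τ) 3 := by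
  have hquad := denom_sq_sub_trace_mul_add_one_of_smul_eq_self h
  rw [htr] at hquad
  rw [← isRoot_cyclotomic_iff_charZero three_pos, cyclotomic_three]
  simp only [IsRoot.def, eval_add, eval_pow, eval_X, eval_one]
  linear_combination hquad

namespace SlashInvariantForm

variable {F : Type*} [FunLike F ℍ ℂ] {Γ : Subgroup SL(2, ℤ)} {k : ℤ}
  [SlashInvariantFormClass F Γ k] (f : F) {γ : SL(2, ℤ)} {τ : ℍ}

theorem eq_zero_of_smul_eq_self (hγ : γ ∈ Γ) (h : γ • τ = τ) (hk : denom γ τ ^ k ≠ 1) :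
    f τ = 0 := by
  have heq := slash_action_eqn_SL'' f hγ τ
  rw [h] at heq
  have : (denom γ τ ^ k - 1) * f τ = 0 := by linear_combination -heq
  exact (mul_eq_zero.1 this).resolve_left (sub_ne_zero.2 hk)

theorem eq_zero_of_smul_eq_self_of_trace_eq_neg_one (hγ : γ ∈ Γ) (htr : γ 0 0 + γ 1 1 = -1)
    (h : γ • τ = τ) (hk : ¬ 3 ∣ k) : f τ = 0 :=
  eq_zero_of_smul_eq_self f hγ h fun h1 ↦ hk <| by
    exact_mod_cast ((isPrimitiveRoot_denom_of_smul_eq_self htr h).zpow_eq_one_iff_dvd k).1 h1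

end SlashInvariantForm

def gamma0SevenElliptic : SL(2, ℤ) := ⟨!![2, 1; -7, -3], by decide⟩

theorem gamma0SevenElliptic_mem_Gamma0 : gamma0SevenElliptic ∈ CongruenceSubgroup.Gamma0 7 := by
  rw [CongruenceSubgroup.Gamma0_mem]; decide

theorem gamma0SevenElliptic_trace_eq_neg_one :
    gamma0SevenElliptic 0 0 + gamma0SevenElliptic 1 1 = -1 := by
  decide

theorem gamma0SevenElliptic_smul_eq_self (w : ℍ)
    (hw : (w : ℂ) = -(5/14) + (Real.sqrt 3 / 14) * Complex.I) : gamma0SevenElliptic • w = w := by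
  have hne : ((-7 : ℤ) : ℂ) * w + (-3 : ℤ) ≠ 0 := denom_ne_zero gamma0SevenElliptic w
  have hsqrt : ((Real.sqrt 3 : ℝ) : ℂ) ^ 2 = 3 := by
    rw [← ofReal_pow, Real.sq_sqrt (by norm_num)]; norm_num
  ext1
  rw [coe_specialLinearGroup_apply]
  change (((2 : ℤ) : ℝ) * (w : ℂ) + ((1 : ℤ) : ℝ)) /
    (((-7 : ℤ) : ℝ) * (w : ℂ) + ((-3 : ℤ) : ℝ)) = w
  push_cast at hne ⊢
  rw [div_eq_iff hne, hw]
  linear_combination (-1/28 : ℂ) * hsqrt + ((Real.sqrt 3 : ℂ) ^ 2 / 28) * I_sq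

theorem fricke7_vanishing_at_rho72_general (k : ℤ) (hke : Even k)
    (hk6 : ¬ (6 ∣ k)) (f : ModularForm (CongruenceSubgroup.Gamma0 7) k) :
    ∀ w : ℍ, (w : ℂ) = -(5/14) + (Real.sqrt 3 / 14) * Complex.I → f w = 0 := by
  intro w hw
  have hk3 : ¬ 3 ∣ k := by
    obtain ⟨r, rfl⟩ := hke
    omega
  exact SlashInvariantForm.eq_zero_of_smul_eq_self_of_trace_eq_neg_one f
    gamma0SevenElliptic_mem_Gamma0 gamma0SevenElliptic_trace_eq_neg_one
    (gamma0SevenElliptic_smul_eq_self w hw) hk3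

theorem fricke7_vanishing_at_rho72 (k : ℤ) (hk : 0 < k) (hke : Even k)
    (hk6 : ¬ (6 ∣ k)) (f : ModularForm (CongruenceSubgroup.Gamma0 7) k)
    (hfricke : ∀ z w : ℍ, (w : ℂ) = -1 / (7 * (z : ℂ)) →
      f w = (Real.sqrt 7 : ℂ) ^ k * (z : ℂ) ^ k * f z) :
    ∀ w : ℍ, (w : ℂ) = -(5/14) + (Real.sqrt 3 / 14) * Complex.I → f w = 0 :=
  fricke7_vanishing_at_rho72_general k hke hk6 f
end
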